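/- Let v assign to each lattice point (n,m) ∈ ℤ×ℤ a smooth real function v_{n,m}(α,β) on an open set D ⊆ ℝ² on which α ≠ β, α ≠ 0 and β ≠ 0. Assume that for every (n,m) ∈ ℤ² and every (α,β) ∈ D: (i) the lattice equation Q1 with δ = 0 (discrete Schwarzian KdV) holds: α·(v_{n,m} − v_{n,m+1})·(v_{n+1,m} − v_{n+1,m+1}) = β·(v_{n,m} − v_{n+1,m})·(v_{n,m+1} − v_{n+1,m+1}); (ii) v_{n+1,m} − v_{n−1,m} ≠ 0, v_{n,m+1} − v_{n,m−1} ≠ 0, v_{n,m} ≠ v_{n+1,m} and v_{n,m} ≠ v_{n,m+1}; (iii) the invariant surface conditions hold: α·∂v_{n,m}/∂α = n·(v_{n+1,m} − v_{n,m})·(v_{n,m} − v_{n−1,m})/(v_{n+1,m} − v_{n−1,m}) and β·∂v_{n,m}/∂β = m·(v_{n,m+1} − v_{n,m})·(v_{n,m} − v_{n,m−1})/(v_{n,m+1} − v_{n,m−1}). Then for every (n,m) ∈ ℤ², the triple (v, v1, v2) := (v_{n,m}, v_{n+1,m}, v_{n,m+1}) satisfies the Q1 (δ=0) reduced system Σ_Q1(n,m)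 on D. -/

import Mathlib

set_option maxHeartbeats 4000000 in
/-- Core algebraic lemma behind equation (F1) of the reduced system. -/
lemma F1alg (a b m v v1 v2 w V W dbv dbv1 : ℝ)
    (hab : a - b ≠ 0) (ha : a ≠ 0) (hb : b ≠ 0)
    (hv1 : v - v1 ≠ 0) (hv2 : v - v2 ≠ 0) (hw : v2 - w ≠ 0) (hVW : V - W ≠ 0)
    (h1 : a * (v - v2) * (v1 - V) = b * (v - v1) * (v2 - V))
    (h2 : a * (w - v) * (W - v1) = b * (w - W) * (v - v1))
    (h3 : b * dbv * (v2 - w) = m * (v2 - v) * (v - w))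
    (h4 : b * dbv1 * (V - W) = m * (V - v1) * (v1 - W)) :
    dbv1 = ((v1 - v2) / (a - b)) *
      ((m * (v - v1) * (v - v2) - b * (v1 - v2) * dbv) / (v - v2) ^ 2) := by
  by_cases h12 : v1 = v2
  · subst h12
    have hV : V = v1 := by
      have h0 : (a - b) * ((v - v1) * (v1 - V)) = 0 := by linear_combination h1
      rcases mul_eq_zero.mp h0 with h | h
      · exact absurd h hab
      rcases mul_eq_zero.mp h with h | h
      · exact absurd h hv1
      · linarith
    subst hV
    have hdbv1 : dbv1 = 0 := by
      rcases mul_eq_zero.mp (show (b * dbv1) * (V - W) = 0 by linear_combination h4) with h | h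
      · rcases mul_eq_zero.mp h with h | h
        · exact absurd h hb
        · exact h
      · exact absurd h hVW
    simp [hdbv1]
  · have h12' : v1 - v2 ≠ 0 := sub_ne_zero.mpr h12
    have hc : b * (v - v1) - a * (v - v2) ≠ 0 := by
      intro hc0
      have key : a * (v - v2) * (v1 - v2) = 0 := by linear_combination h1 + (v2 - V) * hc0
      exact mul_ne_zero (mul_ne_zero ha hv2) h12' key
    have hc' : a * (w - v) + b * (v - v1) ≠ 0 := by
      intro hc0
      have hw1 : b * (v - v1) * (v1 - w) = 0 := by linear_combination h2 - (W - v1) * hc0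
      have hvw : v1 - w = 0 := by
        rcases mul_eq_zero.mp hw1 with h | h
        · rcases mul_eq_zero.mp h with h | h
          · exact absurd h hb
          · exact absurd h hv1
        · exact h
      have : (a - b) * (v - v1) = 0 := by linear_combination -hc0 - a * hvw
      exact mul_ne_zero hab hv1 this
    have key : ((b * (V - W)) * ((b * (v2 - w)) * ((b * (v - v1) - a * (v - v2)) * (a * (w - v) + b * (v - v1))))) * (dbv1 * ((a - b) * (v - v2) ^ 2))
        = ((b * (V - W)) * ((b * (v2 - w)) * ((b * (v - v1) - a * (v - v2)) * (a * (w - v) + b * (v - v1))))) * ((v1 - v2) * (m * (v - v1) * (v - v2) - b * (v1 - v2) * dbv)) := by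
      linear_combination ((b^4*v1^2*v2^2*w - b^4*v1^2*v2^3 + (-2)*b^4*v*v1*v2^2*w + 2*b^4*v*v1*v2^3 + (-2)*b^4*v*v1^2*v2*w + 2*b^4*v*v1^2*v2^2 + b^4*v^2*v2^2*w - b^4*v^2*v2^3 + 4*b^4*v^2*v1*v2*w + (-4)*b^4*v^2*v1*v2^2 + b^4*v^2*v1^2*w - b^4*v^2*v1^2*v2 + (-2)*b^4*v^3*v2*w + 2*b^4*v^3*v2^2 + (-2)*b^4*v^3*v1*w + 2*b^4*v^3*v1*v2 + b^4*v^4*w - b^4*v^4*v2 - a*b^3*v1*v2^2*w^2 + a*b^3*v1*v2^4 - a*b^3*v1^2*v2^2*w + a*b^3*v1^2*v2^3 + a*b^3*v*v2^2*w^2 - a*b^3*v*v2^4 + 2*a*b^3*v*v1*v2*w^2 + 4*a*b^3*v*v1*v2^2*w + (-6)*a*b^3*v*v1*v2^3 + 2*a*b^3*v*v1^2*v2*w + (-2)*a*b^3*v*v1^2*v2^2 + (-2)*a*b^3*v^2*v2*w^2 + (-3)*a*b^3*v^2*v2^2*w + 5*a*b^3*v^2*v2^3 - a*b^3*v^2*v1*w^2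 + (-8)*a*b^3*v^2*v1*v2*w + 9*a*b^3*v^2*v1*v2^2 - a*b^3*v^2*v1^2*w + a*b^3*v^2*v1^2*v2 + a*b^3*v^3*w^2 + 6*a*b^3*v^3*v2*w + (-7)*a*b^3*v^3*v2^2 + 4*a*b^3*v^3*v1*w + (-4)*a*b^3*v^3*v1*v2 + (-3)*a*b^3*v^4*w + 3*a*b^3*v^4*v2 + a^2*b^2*v2^3*w^2 - a^2*b^2*v2^4*w + a^2*b^2*v1*v2^2*w^2 - a^2*b^2*v1*v2^4 + (-4)*a^2*b^2*v*v2^2*w^2 + 2*a^2*b^2*v*v2^3*w + 2*a^2*b^2*v*v2^4 + (-2)*a^2*b^2*v*v1*v2*w^2 + (-2)*a^2*b^2*v*v1*v2^2*w + 4*a^2*b^2*v*v1*v2^3 + 5*a^2*b^2*v^2*v2*w^2 + 2*a^2*b^2*v^2*v2^2*w + (-7)*a^2*b^2*v^2*v2^3 + a^2*b^2*v^2*v1*w^2 + 4*a^2*b^2*v^2*v1*v2*w + (-5)*a^2*b^2*v^2*v1*v2^2 + (-2)*a^2*b^2*v^3*w^2 + (-6)*a^2*b^2*v^3*v2*w +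 8*a^2*b^2*v^3*v2^2 + (-2)*a^2*b^2*v^3*v1*w + 2*a^2*b^2*v^3*v1*v2 + 3*a^2*b^2*v^4*w + (-3)*a^2*b^2*v^4*v2 - a^3*b*v2^3*w^2 + a^3*b*v2^4*w + 3*a^3*b*v*v2^2*w^2 + (-2)*a^3*b*v*v2^3*w - a^3*b*v*v2^4 + (-3)*a^3*b*v^2*v2*w^2 + 3*a^3*b*v^2*v2^3 + a^3*b*v^3*w^2 + 2*a^3*b*v^3*v2*w + (-3)*a^3*b*v^3*v2^2 - a^3*b*v^4*w + a^3*b*v^4*v2)) * h4 + ((-b^4*v1^2*v2^2*W + b^4*v1^2*v2^2*V + 2*b^4*v1^3*v2*W + (-2)*b^4*v1^3*v2*V - b^4*v1^4*W + b^4*v1^4*V + 2*b^4*v*v1*v2^2*W + (-2)*b^4*v*v1*v2^2*V + (-4)*b^4*v*v1^2*v2*W + 4*b^4*v*v1^2*v2*V + 2*b^4*v*v1^3*W + (-2)*b^4*v*v1^3*V - b^4*v^2*v2^2*W + b^4*v^2*v2^2*V + 2*b^4*v^2*v1*v2*W + (-2)*b^4*v^2*v1*v2*V - b^4*v^2*v1^2*W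 + b^4*v^2*v1^2*V + a*b^3*v1*v2^2*w*W - a*b^3*v1*v2^2*w*V + a*b^3*v1*v2^3*W - a*b^3*v1*v2^3*V + (-2)*a*b^3*v1^2*v2*w*W + 2*a*b^3*v1^2*v2*w*V + (-2)*a*b^3*v1^2*v2^2*W + 2*a*b^3*v1^2*v2^2*V + a*b^3*v1^3*w*W - a*b^3*v1^3*w*V + a*b^3*v1^3*v2*W - a*b^3*v1^3*v2*V - a*b^3*v*v2^2*w*W + a*b^3*v*v2^2*w*V - a*b^3*v*v2^3*W + a*b^3*v*v2^3*V + 2*a*b^3*v*v1*v2*w*W + (-2)*a*b^3*v*v1*v2*w*V - a*b^3*v*v1^2*w*W + a*b^3*v*v1^2*w*V + 3*a*b^3*v*v1^2*v2*W + (-3)*a*b^3*v*v1^2*v2*V + (-2)*a*b^3*v*v1^3*W + 2*a*b^3*v*v1^3*V + 2*a*b^3*v^2*v2^2*W + (-2)*a*b^3*v^2*v2^2*V + (-4)*a*b^3*v^2*v1*v2*W + 4*a*b^3*v^2*v1*v2*V + 2*a*b^3*v^2*v1^2*W + (-2)*a*b^3*v^2*v1^2*V - a^2*b^2*v2^3*w*W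 + a^2*b^2*v2^3*w*V + 2*a^2*b^2*v1*v2^2*w*W + (-2)*a^2*b^2*v1*v2^2*w*V - a^2*b^2*v1^2*v2*w*W + a^2*b^2*v1^2*v2*w*V + a^2*b^2*v*v2^2*w*W - a^2*b^2*v*v2^2*w*V + a^2*b^2*v*v2^3*W - a^2*b^2*v*v2^3*V + (-2)*a^2*b^2*v*v1*v2*w*W + 2*a^2*b^2*v*v1*v2*w*V + (-2)*a^2*b^2*v*v1*v2^2*W + 2*a^2*b^2*v*v1*v2^2*V + a^2*b^2*v*v1^2*w*W - a^2*b^2*v*v1^2*w*V + a^2*b^2*v*v1^2*v2*W - a^2*b^2*v*v1^2*v2*V - a^2*b^2*v^2*v2^2*W + a^2*b^2*v^2*v2^2*V + 2*a^2*b^2*v^2*v1*v2*W + (-2)*a^2*b^2*v^2*v1*v2*V - a^2*b^2*v^2*v1^2*W + a^2*b^2*v^2*v1^2*V)) * h3 + ((b^3*m*v1*v2^2*w*W - b^3*m*v1*v2^3*W + b^3*m*v1*v2^3*w + (-2)*b^3*m*v1^2*v2^2*w + b^3*m*v1^3*v2^2 - b^3*m*v*v2^2*w*W + b^3*m*v*v2^3*W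 - b^3*m*v*v2^3*w + (-2)*b^3*m*v*v1*v2*w*W + 2*b^3*m*v*v1*v2^2*W + 4*b^3*m*v*v1^2*v2*w - b^3*m*v*v1^2*v2^2 + (-2)*b^3*m*v*v1^3*v2 + 2*b^3*m*v^2*v2*w*W + (-2)*b^3*m*v^2*v2^2*W + 2*b^3*m*v^2*v2^2*w + b^3*m*v^2*v1*w*W - b^3*m*v^2*v1*v2*W + (-3)*b^3*m*v^2*v1*v2*w + (-2)*b^3*m*v^2*v1^2*w + 2*b^3*m*v^2*v1^2*v2 + b^3*m*v^2*v1^3 - b^3*m*v^3*w*W + b^3*m*v^3*v2*W - b^3*m*v^3*v2*w + 2*b^3*m*v^3*v1*w - b^3*m*v^3*v1^2 - a*b^2*m*v2^2*w^2*W + a*b^2*m*v2^3*w*W - a*b^2*m*v2^3*w^2 - a*b^2*m*v1*v2^2*w*W + 2*a*b^2*m*v1*v2^2*w^2 + a*b^2*m*v1*v2^3*W - a*b^2*m*v1^2*v2^3 + 2*a*b^2*m*v*v2*w^2*W + 2*a*b^2*m*v*v2^2*w^2 + (-2)*a*b^2*m*v*v2^3*W + a*b^2*m*v*v2^3*w +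 2*a*b^2*m*v*v1*v2*w*W + (-4)*a*b^2*m*v*v1*v2*w^2 + (-2)*a*b^2*m*v*v1*v2^2*W + (-3)*a*b^2*m*v*v1*v2^2*w + a*b^2*m*v*v1*v2^3 + 3*a*b^2*m*v*v1^2*v2^2 - a*b^2*m*v^2*w^2*W + (-3)*a*b^2*m*v^2*v2*w*W - a*b^2*m*v^2*v2*w^2 + 4*a*b^2*m*v^2*v2^2*W + (-2)*a*b^2*m*v^2*v2^2*w - a*b^2*m*v^2*v1*w*W + 2*a*b^2*m*v^2*v1*w^2 + a*b^2*m*v^2*v1*v2*W + 6*a*b^2*m*v^2*v1*v2*w + (-2)*a*b^2*m*v^2*v1*v2^2 + (-3)*a*b^2*m*v^2*v1^2*v2 + 2*a*b^2*m*v^3*w*W + (-2)*a*b^2*m*v^3*v2*W + a*b^2*m*v^3*v2*w + (-3)*a*b^2*m*v^3*v1*w + a*b^2*m*v^3*v1*v2 + a*b^2*m*v^3*v1^2 + a^2*b*m*v2^2*w^2*W - a^2*b*m*v2^3*w*W - a^2*b*m*v1*v2^2*w^2 + a^2*b*m*v1*v2^3*w + (-2)*a^2*b*m*v*v2*w^2*W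 + a^2*b*m*v*v2^2*w*W + a^2*b*m*v*v2^3*W + 2*a^2*b*m*v*v1*v2*w^2 - a^2*b*m*v*v1*v2^2*w - a^2*b*m*v*v1*v2^3 + a^2*b*m*v^2*w^2*W + a^2*b*m*v^2*v2*w*W + (-2)*a^2*b*m*v^2*v2^2*W - a^2*b*m*v^2*v1*w^2 - a^2*b*m*v^2*v1*v2*w + 2*a^2*b*m*v^2*v1*v2^2 - a^2*b*m*v^3*w*W + a^2*b*m*v^3*v2*W + a^2*b*m*v^3*v1*w - a^2*b*m*v^3*v1*v2)) * h1 + ((-b^3*m*v1*v2^4 + 2*b^3*m*v1^2*v2^3 - b^3*m*v1^3*v2^2 + b^3*m*v*v2^4 + (-3)*b^3*m*v*v1^2*v2^2 + 2*b^3*m*v*v1^3*v2 + (-2)*b^3*m*v^2*v2^3 + 3*b^3*m*v^2*v1*v2^2 - b^3*m*v^2*v1^3 + b^3*m*v^3*v2^2 + (-2)*b^3*m*v^3*v1*v2 + b^3*m*v^3*v1^2 + a*b^2*m*v2^4*w + (-2)*a*b^2*m*v1*v2^3*w + a*b^2*m*v1^2*v2^2*w + (-2)*a*b^2*m*v*v2^3*w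 - a*b^2*m*v*v2^4 + 4*a*b^2*m*v*v1*v2^2*w + 2*a*b^2*m*v*v1*v2^3 + (-2)*a*b^2*m*v*v1^2*v2*w - a*b^2*m*v*v1^2*v2^2 + a*b^2*m*v^2*v2^2*w + 2*a*b^2*m*v^2*v2^3 + (-2)*a*b^2*m*v^2*v1*v2*w + (-4)*a*b^2*m*v^2*v1*v2^2 + a*b^2*m*v^2*v1^2*w + 2*a*b^2*m*v^2*v1^2*v2 - a*b^2*m*v^3*v2^2 + 2*a*b^2*m*v^3*v1*v2 - a*b^2*m*v^3*v1^2)) * h2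
    have key2 : dbv1 * ((a - b) * (v - v2) ^ 2)
        = (v1 - v2) * (m * (v - v1) * (v - v2) - b * (v1 - v2) * dbv) :=
      mul_left_cancel₀ (mul_ne_zero (mul_ne_zero hb hVW)
        (mul_ne_zero (mul_ne_zero hb hw) (mul_ne_zero hc hc'))) key
    rw [div_mul_div_comm, eq_div_iff (mul_ne_zero hab (pow_ne_zero 2 hv2))]
    linear_combination key2

set_option maxHeartbeats 4000000 in
/-- Core algebraic lemma behind equation (F3) of the reduced system. -/
lemma F3alg (a b nn mm v00 v10 vm0 v01 q d1 d3 P L : ℝ)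
    (ha : a ≠ 0) (hab : a - b ≠ 0) (h1m : v10 - vm0 ≠ 0)
    (h01 : v00 - v01 ≠ 0) (h0010 : v00 - v10 ≠ 0)
    (hd1 : d1 * ((a - b) * (v00 - v01) ^ 2)
      = (v10 - v01) * (mm * (v00 - v10) * (v00 - v01) - b * (v10 - v01) * q))
    (hd3 : d3 * ((a - b) * (v00 - v01) ^ 2)
      = (vm0 - v01) * (mm * (v00 - vm0) * (v00 - v01) - b * (vm0 - v01) * q))
    (hP : a * P * (v10 - vm0) = nn * (v10 - v00) * (v00 - vm0))
    (hL : L * (a * (v10 - vm0)) ^ 2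
      = nn * ((d1 - q) * (v00 - vm0) + (v10 - v00) * (q - d3)) * (a * (v10 - vm0))
        - nn * ((v10 - v00) * (v00 - vm0)) * (a * (d1 - d3))) :
    L = (1 / (a - b)) * (2 * (a / (v00 - v10) - b / (v00 - v01)) * P * q + nn * q - mm * P) := by
  have key : ((a * (v10 - vm0)) ^ 3 * ((a - b) * (v00 - v01) ^ 2) ^ 2) * (L * ((a - b) * (v00 - v10) * (v00 - v01)))
      = ((a * (v10 - vm0)) ^ 3 * ((a - b) * (v00 - v01) ^ 2) ^ 2) * (2 * (a * (v00 - v01) - b * (v00 - v10)) * P * q + (nn * q - mm * P) * ((v00 - v10) * (v00 - v01))) := by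
    linear_combination ((a*b^3*v10*vm0*v01^5 - a*b^3*v10^2*v01^5 - a*b^3*v00*vm0*v01^5 + a*b^3*v00*v10*v01^5 + (-5)*a*b^3*v00*v10*vm0*v01^4 + 5*a*b^3*v00*v10^2*v01^4 + 5*a*b^3*v00^2*vm0*v01^4 + (-5)*a*b^3*v00^2*v10*v01^4 + 10*a*b^3*v00^2*v10*vm0*v01^3 + (-10)*a*b^3*v00^2*v10^2*v01^3 + (-10)*a*b^3*v00^3*vm0*v01^3 + 10*a*b^3*v00^3*v10*v01^3 + (-10)*a*b^3*v00^3*v10*vm0*v01^2 + 10*a*b^3*v00^3*v10^2*v01^2 + 10*a*b^3*v00^4*vm0*v01^2 + (-10)*a*b^3*v00^4*v10*v01^2 + 5*a*b^3*v00^4*v10*vm0*v01 + (-5)*a*b^3*v00^4*v10^2*v01 + (-5)*a*b^3*v00^5*vm0*v01 + 5*a*b^3*v00^5*v10*v01 - a*b^3*v00^5*v10*vm0 + a*b^3*v00^5*v10^2 + a*b^3*v00^6*vm0 - a*b^3*v00^6*v10 + (-3)*a^2*b^2*v10*vm0*v01^5 + 3*a^2*b^2*v10^2*v01^5 + 3*a^2*b^2*v00*vm0*v01^5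 + (-3)*a^2*b^2*v00*v10*v01^5 + 15*a^2*b^2*v00*v10*vm0*v01^4 + (-15)*a^2*b^2*v00*v10^2*v01^4 + (-15)*a^2*b^2*v00^2*vm0*v01^4 + 15*a^2*b^2*v00^2*v10*v01^4 + (-30)*a^2*b^2*v00^2*v10*vm0*v01^3 + 30*a^2*b^2*v00^2*v10^2*v01^3 + 30*a^2*b^2*v00^3*vm0*v01^3 + (-30)*a^2*b^2*v00^3*v10*v01^3 + 30*a^2*b^2*v00^3*v10*vm0*v01^2 + (-30)*a^2*b^2*v00^3*v10^2*v01^2 + (-30)*a^2*b^2*v00^4*vm0*v01^2 + 30*a^2*b^2*v00^4*v10*v01^2 + (-15)*a^2*b^2*v00^4*v10*vm0*v01 + 15*a^2*b^2*v00^4*v10^2*v01 + 15*a^2*b^2*v00^5*vm0*v01 + (-15)*a^2*b^2*v00^5*v10*v01 + 3*a^2*b^2*v00^5*v10*vm0 + (-3)*a^2*b^2*v00^5*v10^2 + (-3)*a^2*b^2*v00^6*vm0 + 3*a^2*b^2*v00^6*v10 + 3*a^3*b*v10*vm0*v01^5 + (-3)*a^3*b*v10^2*v01^5 + (-3)*a^3*b*v00*vm0*v01^5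 + 3*a^3*b*v00*v10*v01^5 + (-15)*a^3*b*v00*v10*vm0*v01^4 + 15*a^3*b*v00*v10^2*v01^4 + 15*a^3*b*v00^2*vm0*v01^4 + (-15)*a^3*b*v00^2*v10*v01^4 + 30*a^3*b*v00^2*v10*vm0*v01^3 + (-30)*a^3*b*v00^2*v10^2*v01^3 + (-30)*a^3*b*v00^3*vm0*v01^3 + 30*a^3*b*v00^3*v10*v01^3 + (-30)*a^3*b*v00^3*v10*vm0*v01^2 + 30*a^3*b*v00^3*v10^2*v01^2 + 30*a^3*b*v00^4*vm0*v01^2 + (-30)*a^3*b*v00^4*v10*v01^2 + 15*a^3*b*v00^4*v10*vm0*v01 + (-15)*a^3*b*v00^4*v10^2*v01 + (-15)*a^3*b*v00^5*vm0*v01 + 15*a^3*b*v00^5*v10*v01 + (-3)*a^3*b*v00^5*v10*vm0 + 3*a^3*b*v00^5*v10^2 + 3*a^3*b*v00^6*vm0 + (-3)*a^3*b*v00^6*v10 - a^4*v10*vm0*v01^5 + a^4*v10^2*v01^5 + a^4*v00*vm0*v01^5 - a^4*v00*v10*v01^5 + 5*a^4*v00*v10*vm0*v01^4 + (-5)*a^4*v00*v10^2*v01^4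 + (-5)*a^4*v00^2*vm0*v01^4 + 5*a^4*v00^2*v10*v01^4 + (-10)*a^4*v00^2*v10*vm0*v01^3 + 10*a^4*v00^2*v10^2*v01^3 + 10*a^4*v00^3*vm0*v01^3 + (-10)*a^4*v00^3*v10*v01^3 + 10*a^4*v00^3*v10*vm0*v01^2 + (-10)*a^4*v00^3*v10^2*v01^2 + (-10)*a^4*v00^4*vm0*v01^2 + 10*a^4*v00^4*v10*v01^2 + (-5)*a^4*v00^4*v10*vm0*v01 + 5*a^4*v00^4*v10^2*v01 + 5*a^4*v00^5*vm0*v01 + (-5)*a^4*v00^5*v10*v01 + a^4*v00^5*v10*vm0 - a^4*v00^5*v10^2 - a^4*v00^6*vm0 + a^4*v00^6*v10)) * hL + ((-a^2*b^2*nn*v10*vm0^3*v01^3 + a^2*b^2*nn*v10^2*vm0^2*v01^3 + a^2*b^2*nn*v00*vm0^3*v01^3 + a^2*b^2*nn*v00*v10*vm0^2*v01^3 + 3*a^2*b^2*nn*v00*v10*vm0^3*v01^2 + (-2)*a^2*b^2*nn*v00*v10^2*vm0*v01^3 + (-3)*a^2*b^2*nn*v00*v10^2*vm0^2*v01^2 +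 (-2)*a^2*b^2*nn*v00^2*vm0^2*v01^3 + (-3)*a^2*b^2*nn*v00^2*vm0^3*v01^2 + a^2*b^2*nn*v00^2*v10*vm0*v01^3 + (-3)*a^2*b^2*nn*v00^2*v10*vm0^2*v01^2 + (-3)*a^2*b^2*nn*v00^2*v10*vm0^3*v01 + a^2*b^2*nn*v00^2*v10^2*v01^3 + 6*a^2*b^2*nn*v00^2*v10^2*vm0*v01^2 + 3*a^2*b^2*nn*v00^2*v10^2*vm0^2*v01 + a^2*b^2*nn*v00^3*vm0*v01^3 + 6*a^2*b^2*nn*v00^3*vm0^2*v01^2 + 3*a^2*b^2*nn*v00^3*vm0^3*v01 - a^2*b^2*nn*v00^3*v10*v01^3 + (-3)*a^2*b^2*nn*v00^3*v10*vm0*v01^2 + 3*a^2*b^2*nn*v00^3*v10*vm0^2*v01 + a^2*b^2*nn*v00^3*v10*vm0^3 + (-3)*a^2*b^2*nn*v00^3*v10^2*v01^2 + (-6)*a^2*b^2*nn*v00^3*v10^2*vm0*v01 - a^2*b^2*nn*v00^3*v10^2*vm0^2 + (-3)*a^2*b^2*nn*v00^4*vm0*v01^2 + (-6)*a^2*b^2*nn*v00^4*vm0^2*v01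 - a^2*b^2*nn*v00^4*vm0^3 + 3*a^2*b^2*nn*v00^4*v10*v01^2 + 3*a^2*b^2*nn*v00^4*v10*vm0*v01 - a^2*b^2*nn*v00^4*v10*vm0^2 + 3*a^2*b^2*nn*v00^4*v10^2*v01 + 2*a^2*b^2*nn*v00^4*v10^2*vm0 + 3*a^2*b^2*nn*v00^5*vm0*v01 + 2*a^2*b^2*nn*v00^5*vm0^2 + (-3)*a^2*b^2*nn*v00^5*v10*v01 - a^2*b^2*nn*v00^5*v10*vm0 - a^2*b^2*nn*v00^5*v10^2 - a^2*b^2*nn*v00^6*vm0 + a^2*b^2*nn*v00^6*v10 + 2*a^3*b*nn*v10*vm0^3*v01^3 + (-2)*a^3*b*nn*v10^2*vm0^2*v01^3 + (-2)*a^3*b*nn*v00*vm0^3*v01^3 + (-2)*a^3*b*nn*v00*v10*vm0^2*v01^3 + (-6)*a^3*b*nn*v00*v10*vm0^3*v01^2 + 4*a^3*b*nn*v00*v10^2*vm0*v01^3 + 6*a^3*b*nn*v00*v10^2*vm0^2*v01^2 + 4*a^3*b*nn*v00^2*vm0^2*v01^3 + 6*a^3*b*nn*v00^2*vm0^3*v01^2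 + (-2)*a^3*b*nn*v00^2*v10*vm0*v01^3 + 6*a^3*b*nn*v00^2*v10*vm0^2*v01^2 + 6*a^3*b*nn*v00^2*v10*vm0^3*v01 + (-2)*a^3*b*nn*v00^2*v10^2*v01^3 + (-12)*a^3*b*nn*v00^2*v10^2*vm0*v01^2 + (-6)*a^3*b*nn*v00^2*v10^2*vm0^2*v01 + (-2)*a^3*b*nn*v00^3*vm0*v01^3 + (-12)*a^3*b*nn*v00^3*vm0^2*v01^2 + (-6)*a^3*b*nn*v00^3*vm0^3*v01 + 2*a^3*b*nn*v00^3*v10*v01^3 + 6*a^3*b*nn*v00^3*v10*vm0*v01^2 + (-6)*a^3*b*nn*v00^3*v10*vm0^2*v01 + (-2)*a^3*b*nn*v00^3*v10*vm0^3 + 6*a^3*b*nn*v00^3*v10^2*v01^2 + 12*a^3*b*nn*v00^3*v10^2*vm0*v01 + 2*a^3*b*nn*v00^3*v10^2*vm0^2 + 6*a^3*b*nn*v00^4*vm0*v01^2 + 12*a^3*b*nn*v00^4*vm0^2*v01 + 2*a^3*b*nn*v00^4*vm0^3 + (-6)*a^3*b*nn*v00^4*v10*v01^2 + (-6)*a^3*b*nn*v00^4*v10*vm0*v01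 + 2*a^3*b*nn*v00^4*v10*vm0^2 + (-6)*a^3*b*nn*v00^4*v10^2*v01 + (-4)*a^3*b*nn*v00^4*v10^2*vm0 + (-6)*a^3*b*nn*v00^5*vm0*v01 + (-4)*a^3*b*nn*v00^5*vm0^2 + 6*a^3*b*nn*v00^5*v10*v01 + 2*a^3*b*nn*v00^5*v10*vm0 + 2*a^3*b*nn*v00^5*v10^2 + 2*a^3*b*nn*v00^6*vm0 + (-2)*a^3*b*nn*v00^6*v10 - a^4*nn*v10*vm0^3*v01^3 + a^4*nn*v10^2*vm0^2*v01^3 + a^4*nn*v00*vm0^3*v01^3 + a^4*nn*v00*v10*vm0^2*v01^3 + 3*a^4*nn*v00*v10*vm0^3*v01^2 + (-2)*a^4*nn*v00*v10^2*vm0*v01^3 + (-3)*a^4*nn*v00*v10^2*vm0^2*v01^2 + (-2)*a^4*nn*v00^2*vm0^2*v01^3 + (-3)*a^4*nn*v00^2*vm0^3*v01^2 + a^4*nn*v00^2*v10*vm0*v01^3 + (-3)*a^4*nn*v00^2*v10*vm0^2*v01^2 + (-3)*a^4*nn*v00^2*v10*vm0^3*v01 + a^4*nn*v00^2*v10^2*v01^3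 + 6*a^4*nn*v00^2*v10^2*vm0*v01^2 + 3*a^4*nn*v00^2*v10^2*vm0^2*v01 + a^4*nn*v00^3*vm0*v01^3 + 6*a^4*nn*v00^3*vm0^2*v01^2 + 3*a^4*nn*v00^3*vm0^3*v01 - a^4*nn*v00^3*v10*v01^3 + (-3)*a^4*nn*v00^3*v10*vm0*v01^2 + 3*a^4*nn*v00^3*v10*vm0^2*v01 + a^4*nn*v00^3*v10*vm0^3 + (-3)*a^4*nn*v00^3*v10^2*v01^2 + (-6)*a^4*nn*v00^3*v10^2*vm0*v01 - a^4*nn*v00^3*v10^2*vm0^2 + (-3)*a^4*nn*v00^4*vm0*v01^2 + (-6)*a^4*nn*v00^4*vm0^2*v01 - a^4*nn*v00^4*vm0^3 + 3*a^4*nn*v00^4*v10*v01^2 + 3*a^4*nn*v00^4*v10*vm0*v01 - a^4*nn*v00^4*v10*vm0^2 + 3*a^4*nn*v00^4*v10^2*v01 + 2*a^4*nn*v00^4*v10^2*vm0 + 3*a^4*nn*v00^5*vm0*v01 + 2*a^4*nn*v00^5*vm0^2 + (-3)*a^4*nn*v00^5*v10*v01 - a^4*nn*v00^5*v10*vm0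 - a^4*nn*v00^5*v10^2 - a^4*nn*v00^6*vm0 + a^4*nn*v00^6*v10)) * hd1 + ((a^2*b^2*nn*v10^3*vm0*v01^3 - a^2*b^2*nn*v10^4*v01^3 + (-3)*a^2*b^2*nn*v00*v10^2*vm0*v01^3 + 3*a^2*b^2*nn*v00*v10^3*v01^3 + (-3)*a^2*b^2*nn*v00*v10^3*vm0*v01^2 + 3*a^2*b^2*nn*v00*v10^4*v01^2 + 3*a^2*b^2*nn*v00^2*v10*vm0*v01^3 + (-3)*a^2*b^2*nn*v00^2*v10^2*v01^3 + 9*a^2*b^2*nn*v00^2*v10^2*vm0*v01^2 + (-9)*a^2*b^2*nn*v00^2*v10^3*v01^2 + 3*a^2*b^2*nn*v00^2*v10^3*vm0*v01 + (-3)*a^2*b^2*nn*v00^2*v10^4*v01 - a^2*b^2*nn*v00^3*vm0*v01^3 + a^2*b^2*nn*v00^3*v10*v01^3 + (-9)*a^2*b^2*nn*v00^3*v10*vm0*v01^2 + 9*a^2*b^2*nn*v00^3*v10^2*v01^2 + (-9)*a^2*b^2*nn*v00^3*v10^2*vm0*v01 + 9*a^2*b^2*nn*v00^3*v10^3*v01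 - a^2*b^2*nn*v00^3*v10^3*vm0 + a^2*b^2*nn*v00^3*v10^4 + 3*a^2*b^2*nn*v00^4*vm0*v01^2 + (-3)*a^2*b^2*nn*v00^4*v10*v01^2 + 9*a^2*b^2*nn*v00^4*v10*vm0*v01 + (-9)*a^2*b^2*nn*v00^4*v10^2*v01 + 3*a^2*b^2*nn*v00^4*v10^2*vm0 + (-3)*a^2*b^2*nn*v00^4*v10^3 + (-3)*a^2*b^2*nn*v00^5*vm0*v01 + 3*a^2*b^2*nn*v00^5*v10*v01 + (-3)*a^2*b^2*nn*v00^5*v10*vm0 + 3*a^2*b^2*nn*v00^5*v10^2 + a^2*b^2*nn*v00^6*vm0 - a^2*b^2*nn*v00^6*v10 + (-2)*a^3*b*nn*v10^3*vm0*v01^3 + 2*a^3*b*nn*v10^4*v01^3 + 6*a^3*b*nn*v00*v10^2*vm0*v01^3 + (-6)*a^3*b*nn*v00*v10^3*v01^3 + 6*a^3*b*nn*v00*v10^3*vm0*v01^2 + (-6)*a^3*b*nn*v00*v10^4*v01^2 + (-6)*a^3*b*nn*v00^2*v10*vm0*v01^3 + 6*a^3*b*nn*v00^2*v10^2*v01^3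 + (-18)*a^3*b*nn*v00^2*v10^2*vm0*v01^2 + 18*a^3*b*nn*v00^2*v10^3*v01^2 + (-6)*a^3*b*nn*v00^2*v10^3*vm0*v01 + 6*a^3*b*nn*v00^2*v10^4*v01 + 2*a^3*b*nn*v00^3*vm0*v01^3 + (-2)*a^3*b*nn*v00^3*v10*v01^3 + 18*a^3*b*nn*v00^3*v10*vm0*v01^2 + (-18)*a^3*b*nn*v00^3*v10^2*v01^2 + 18*a^3*b*nn*v00^3*v10^2*vm0*v01 + (-18)*a^3*b*nn*v00^3*v10^3*v01 + 2*a^3*b*nn*v00^3*v10^3*vm0 + (-2)*a^3*b*nn*v00^3*v10^4 + (-6)*a^3*b*nn*v00^4*vm0*v01^2 + 6*a^3*b*nn*v00^4*v10*v01^2 + (-18)*a^3*b*nn*v00^4*v10*vm0*v01 + 18*a^3*b*nn*v00^4*v10^2*v01 + (-6)*a^3*b*nn*v00^4*v10^2*vm0 + 6*a^3*b*nn*v00^4*v10^3 + 6*a^3*b*nn*v00^5*vm0*v01 + (-6)*a^3*b*nn*v00^5*v10*v01 + 6*a^3*b*nn*v00^5*v10*vm0 + (-6)*a^3*b*nn*v00^5*v10^2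 + (-2)*a^3*b*nn*v00^6*vm0 + 2*a^3*b*nn*v00^6*v10 + a^4*nn*v10^3*vm0*v01^3 - a^4*nn*v10^4*v01^3 + (-3)*a^4*nn*v00*v10^2*vm0*v01^3 + 3*a^4*nn*v00*v10^3*v01^3 + (-3)*a^4*nn*v00*v10^3*vm0*v01^2 + 3*a^4*nn*v00*v10^4*v01^2 + 3*a^4*nn*v00^2*v10*vm0*v01^3 + (-3)*a^4*nn*v00^2*v10^2*v01^3 + 9*a^4*nn*v00^2*v10^2*vm0*v01^2 + (-9)*a^4*nn*v00^2*v10^3*v01^2 + 3*a^4*nn*v00^2*v10^3*vm0*v01 + (-3)*a^4*nn*v00^2*v10^4*v01 - a^4*nn*v00^3*vm0*v01^3 + a^4*nn*v00^3*v10*v01^3 + (-9)*a^4*nn*v00^3*v10*vm0*v01^2 + 9*a^4*nn*v00^3*v10^2*v01^2 + (-9)*a^4*nn*v00^3*v10^2*vm0*v01 + 9*a^4*nn*v00^3*v10^3*v01 - a^4*nn*v00^3*v10^3*vm0 + a^4*nn*v00^3*v10^4 + 3*a^4*nn*v00^4*vm0*v01^2 + (-3)*a^4*nn*v00^4*v10*v01^2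 + 9*a^4*nn*v00^4*v10*vm0*v01 + (-9)*a^4*nn*v00^4*v10^2*v01 + 3*a^4*nn*v00^4*v10^2*vm0 + (-3)*a^4*nn*v00^4*v10^3 + (-3)*a^4*nn*v00^5*vm0*v01 + 3*a^4*nn*v00^5*v10*v01 + (-3)*a^4*nn*v00^5*v10*vm0 + 3*a^4*nn*v00^5*v10^2 + a^4*nn*v00^6*vm0 - a^4*nn*v00^6*v10)) * hd3 + ((a^2*b^2*mm*v10*vm0^2*v01^5 + (-2)*a^2*b^2*mm*v10^2*vm0*v01^5 + a^2*b^2*mm*v10^3*v01^5 - a^2*b^2*mm*v00*vm0^2*v01^5 + 2*a^2*b^2*mm*v00*v10*vm0*v01^5 + (-5)*a^2*b^2*mm*v00*v10*vm0^2*v01^4 - a^2*b^2*mm*v00*v10^2*v01^5 + 10*a^2*b^2*mm*v00*v10^2*vm0*v01^4 + (-5)*a^2*b^2*mm*v00*v10^3*v01^4 + 5*a^2*b^2*mm*v00^2*vm0^2*v01^4 + (-10)*a^2*b^2*mm*v00^2*v10*vm0*v01^4 + 10*a^2*b^2*mm*v00^2*v10*vm0^2*v01^3 + 5*a^2*b^2*mm*v00^2*v10^2*v01^4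 + (-20)*a^2*b^2*mm*v00^2*v10^2*vm0*v01^3 + 10*a^2*b^2*mm*v00^2*v10^3*v01^3 + (-10)*a^2*b^2*mm*v00^3*vm0^2*v01^3 + 20*a^2*b^2*mm*v00^3*v10*vm0*v01^3 + (-10)*a^2*b^2*mm*v00^3*v10*vm0^2*v01^2 + (-10)*a^2*b^2*mm*v00^3*v10^2*v01^3 + 20*a^2*b^2*mm*v00^3*v10^2*vm0*v01^2 + (-10)*a^2*b^2*mm*v00^3*v10^3*v01^2 + 10*a^2*b^2*mm*v00^4*vm0^2*v01^2 + (-20)*a^2*b^2*mm*v00^4*v10*vm0*v01^2 + 5*a^2*b^2*mm*v00^4*v10*vm0^2*v01 + 10*a^2*b^2*mm*v00^4*v10^2*v01^2 + (-10)*a^2*b^2*mm*v00^4*v10^2*vm0*v01 + 5*a^2*b^2*mm*v00^4*v10^3*v01 + (-5)*a^2*b^2*mm*v00^5*vm0^2*v01 + 10*a^2*b^2*mm*v00^5*v10*vm0*v01 - a^2*b^2*mm*v00^5*v10*vm0^2 + (-5)*a^2*b^2*mm*v00^5*v10^2*v01 + 2*a^2*b^2*mm*v00^5*v10^2*vm0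 - a^2*b^2*mm*v00^5*v10^3 + a^2*b^2*mm*v00^6*vm0^2 + (-2)*a^2*b^2*mm*v00^6*v10*vm0 + a^2*b^2*mm*v00^6*v10^2 + (-2)*a^2*b^3*v10*vm0^2*v01^4*q + 4*a^2*b^3*v10^2*vm0*v01^4*q + (-2)*a^2*b^3*v10^3*v01^4*q + 2*a^2*b^3*v00*vm0^2*v01^4*q + (-4)*a^2*b^3*v00*v10*vm0*v01^4*q + 8*a^2*b^3*v00*v10*vm0^2*v01^3*q + 2*a^2*b^3*v00*v10^2*v01^4*q + (-16)*a^2*b^3*v00*v10^2*vm0*v01^3*q + 8*a^2*b^3*v00*v10^3*v01^3*q + (-8)*a^2*b^3*v00^2*vm0^2*v01^3*q + 16*a^2*b^3*v00^2*v10*vm0*v01^3*q + (-12)*a^2*b^3*v00^2*v10*vm0^2*v01^2*q + (-8)*a^2*b^3*v00^2*v10^2*v01^3*q + 24*a^2*b^3*v00^2*v10^2*vm0*v01^2*q + (-12)*a^2*b^3*v00^2*v10^3*v01^2*q + 12*a^2*b^3*v00^3*vm0^2*v01^2*q + (-24)*a^2*b^3*v00^3*v10*vm0*v01^2*q + 8*a^2*b^3*v00^3*v10*vm0^2*v01*q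 + 12*a^2*b^3*v00^3*v10^2*v01^2*q + (-16)*a^2*b^3*v00^3*v10^2*vm0*v01*q + 8*a^2*b^3*v00^3*v10^3*v01*q + (-8)*a^2*b^3*v00^4*vm0^2*v01*q + 16*a^2*b^3*v00^4*v10*vm0*v01*q + (-2)*a^2*b^3*v00^4*v10*vm0^2*q + (-8)*a^2*b^3*v00^4*v10^2*v01*q + 4*a^2*b^3*v00^4*v10^2*vm0*q + (-2)*a^2*b^3*v00^4*v10^3*q + 2*a^2*b^3*v00^5*vm0^2*q + (-4)*a^2*b^3*v00^5*v10*vm0*q + 2*a^2*b^3*v00^5*v10^2*q + (-2)*a^3*b*mm*v10*vm0^2*v01^5 + 4*a^3*b*mm*v10^2*vm0*v01^5 + (-2)*a^3*b*mm*v10^3*v01^5 + 2*a^3*b*mm*v00*vm0^2*v01^5 + (-4)*a^3*b*mm*v00*v10*vm0*v01^5 + 10*a^3*b*mm*v00*v10*vm0^2*v01^4 + 2*a^3*b*mm*v00*v10^2*v01^5 + (-20)*a^3*b*mm*v00*v10^2*vm0*v01^4 + 10*a^3*b*mm*v00*v10^3*v01^4 + (-10)*a^3*b*mm*v00^2*vm0^2*v01^4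 + 20*a^3*b*mm*v00^2*v10*vm0*v01^4 + (-20)*a^3*b*mm*v00^2*v10*vm0^2*v01^3 + (-10)*a^3*b*mm*v00^2*v10^2*v01^4 + 40*a^3*b*mm*v00^2*v10^2*vm0*v01^3 + (-20)*a^3*b*mm*v00^2*v10^3*v01^3 + 20*a^3*b*mm*v00^3*vm0^2*v01^3 + (-40)*a^3*b*mm*v00^3*v10*vm0*v01^3 + 20*a^3*b*mm*v00^3*v10*vm0^2*v01^2 + 20*a^3*b*mm*v00^3*v10^2*v01^3 + (-40)*a^3*b*mm*v00^3*v10^2*vm0*v01^2 + 20*a^3*b*mm*v00^3*v10^3*v01^2 + (-20)*a^3*b*mm*v00^4*vm0^2*v01^2 + 40*a^3*b*mm*v00^4*v10*vm0*v01^2 + (-10)*a^3*b*mm*v00^4*v10*vm0^2*v01 + (-20)*a^3*b*mm*v00^4*v10^2*v01^2 + 20*a^3*b*mm*v00^4*v10^2*vm0*v01 + (-10)*a^3*b*mm*v00^4*v10^3*v01 + 10*a^3*b*mm*v00^5*vm0^2*v01 + (-20)*a^3*b*mm*v00^5*v10*vm0*v01 + 2*a^3*b*mm*v00^5*v10*vm0^2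 + 10*a^3*b*mm*v00^5*v10^2*v01 + (-4)*a^3*b*mm*v00^5*v10^2*vm0 + 2*a^3*b*mm*v00^5*v10^3 + (-2)*a^3*b*mm*v00^6*vm0^2 + 4*a^3*b*mm*v00^6*v10*vm0 + (-2)*a^3*b*mm*v00^6*v10^2 + 2*a^3*b^2*vm0^2*v01^5*q + (-4)*a^3*b^2*v10*vm0*v01^5*q + 4*a^3*b^2*v10*vm0^2*v01^4*q + 2*a^3*b^2*v10^2*v01^5*q + (-8)*a^3*b^2*v10^2*vm0*v01^4*q + 4*a^3*b^2*v10^3*v01^4*q + (-14)*a^3*b^2*v00*vm0^2*v01^4*q + 28*a^3*b^2*v00*v10*vm0*v01^4*q + (-16)*a^3*b^2*v00*v10*vm0^2*v01^3*q + (-14)*a^3*b^2*v00*v10^2*v01^4*q + 32*a^3*b^2*v00*v10^2*vm0*v01^3*q + (-16)*a^3*b^2*v00*v10^3*v01^3*q + 36*a^3*b^2*v00^2*vm0^2*v01^3*q + (-72)*a^3*b^2*v00^2*v10*vm0*v01^3*q + 24*a^3*b^2*v00^2*v10*vm0^2*v01^2*q + 36*a^3*b^2*v00^2*v10^2*v01^3*q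 + (-48)*a^3*b^2*v00^2*v10^2*vm0*v01^2*q + 24*a^3*b^2*v00^2*v10^3*v01^2*q + (-44)*a^3*b^2*v00^3*vm0^2*v01^2*q + 88*a^3*b^2*v00^3*v10*vm0*v01^2*q + (-16)*a^3*b^2*v00^3*v10*vm0^2*v01*q + (-44)*a^3*b^2*v00^3*v10^2*v01^2*q + 32*a^3*b^2*v00^3*v10^2*vm0*v01*q + (-16)*a^3*b^2*v00^3*v10^3*v01*q + 26*a^3*b^2*v00^4*vm0^2*v01*q + (-52)*a^3*b^2*v00^4*v10*vm0*v01*q + 4*a^3*b^2*v00^4*v10*vm0^2*q + 26*a^3*b^2*v00^4*v10^2*v01*q + (-8)*a^3*b^2*v00^4*v10^2*vm0*q + 4*a^3*b^2*v00^4*v10^3*q + (-6)*a^3*b^2*v00^5*vm0^2*q + 12*a^3*b^2*v00^5*v10*vm0*q + (-6)*a^3*b^2*v00^5*v10^2*q + a^4*mm*v10*vm0^2*v01^5 + (-2)*a^4*mm*v10^2*vm0*v01^5 + a^4*mm*v10^3*v01^5 - a^4*mm*v00*vm0^2*v01^5 + 2*a^4*mm*v00*v10*vm0*v01^5 + (-5)*a^4*mm*v00*v10*vm0^2*v01^4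 - a^4*mm*v00*v10^2*v01^5 + 10*a^4*mm*v00*v10^2*vm0*v01^4 + (-5)*a^4*mm*v00*v10^3*v01^4 + 5*a^4*mm*v00^2*vm0^2*v01^4 + (-10)*a^4*mm*v00^2*v10*vm0*v01^4 + 10*a^4*mm*v00^2*v10*vm0^2*v01^3 + 5*a^4*mm*v00^2*v10^2*v01^4 + (-20)*a^4*mm*v00^2*v10^2*vm0*v01^3 + 10*a^4*mm*v00^2*v10^3*v01^3 + (-10)*a^4*mm*v00^3*vm0^2*v01^3 + 20*a^4*mm*v00^3*v10*vm0*v01^3 + (-10)*a^4*mm*v00^3*v10*vm0^2*v01^2 + (-10)*a^4*mm*v00^3*v10^2*v01^3 + 20*a^4*mm*v00^3*v10^2*vm0*v01^2 + (-10)*a^4*mm*v00^3*v10^3*v01^2 + 10*a^4*mm*v00^4*vm0^2*v01^2 + (-20)*a^4*mm*v00^4*v10*vm0*v01^2 + 5*a^4*mm*v00^4*v10*vm0^2*v01 + 10*a^4*mm*v00^4*v10^2*v01^2 + (-10)*a^4*mm*v00^4*v10^2*vm0*v01 + 5*a^4*mm*v00^4*v10^3*v01 + (-5)*a^4*mm*v00^5*vm0^2*v01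 + 10*a^4*mm*v00^5*v10*vm0*v01 - a^4*mm*v00^5*v10*vm0^2 + (-5)*a^4*mm*v00^5*v10^2*v01 + 2*a^4*mm*v00^5*v10^2*vm0 - a^4*mm*v00^5*v10^3 + a^4*mm*v00^6*vm0^2 + (-2)*a^4*mm*v00^6*v10*vm0 + a^4*mm*v00^6*v10^2 + (-4)*a^4*b*vm0^2*v01^5*q + 8*a^4*b*v10*vm0*v01^5*q + (-2)*a^4*b*v10*vm0^2*v01^4*q + (-4)*a^4*b*v10^2*v01^5*q + 4*a^4*b*v10^2*vm0*v01^4*q + (-2)*a^4*b*v10^3*v01^4*q + 22*a^4*b*v00*vm0^2*v01^4*q + (-44)*a^4*b*v00*v10*vm0*v01^4*q + 8*a^4*b*v00*v10*vm0^2*v01^3*q + 22*a^4*b*v00*v10^2*v01^4*q + (-16)*a^4*b*v00*v10^2*vm0*v01^3*q + 8*a^4*b*v00*v10^3*v01^3*q + (-48)*a^4*b*v00^2*vm0^2*v01^3*q + 96*a^4*b*v00^2*v10*vm0*v01^3*q + (-12)*a^4*b*v00^2*v10*vm0^2*v01^2*q + (-48)*a^4*b*v00^2*v10^2*v01^3*q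 + 24*a^4*b*v00^2*v10^2*vm0*v01^2*q + (-12)*a^4*b*v00^2*v10^3*v01^2*q + 52*a^4*b*v00^3*vm0^2*v01^2*q + (-104)*a^4*b*v00^3*v10*vm0*v01^2*q + 8*a^4*b*v00^3*v10*vm0^2*v01*q + 52*a^4*b*v00^3*v10^2*v01^2*q + (-16)*a^4*b*v00^3*v10^2*vm0*v01*q + 8*a^4*b*v00^3*v10^3*v01*q + (-28)*a^4*b*v00^4*vm0^2*v01*q + 56*a^4*b*v00^4*v10*vm0*v01*q + (-2)*a^4*b*v00^4*v10*vm0^2*q + (-28)*a^4*b*v00^4*v10^2*v01*q + 4*a^4*b*v00^4*v10^2*vm0*q + (-2)*a^4*b*v00^4*v10^3*q + 6*a^4*b*v00^5*vm0^2*q + (-12)*a^4*b*v00^5*v10*vm0*q + 6*a^4*b*v00^5*v10^2*q + 2*a^5*vm0^2*v01^5*q + (-4)*a^5*v10*vm0*v01^5*q + 2*a^5*v10^2*v01^5*q + (-10)*a^5*v00*vm0^2*v01^4*q + 20*a^5*v00*v10*vm0*v01^4*q + (-10)*a^5*v00*v10^2*v01^4*q + 20*a^5*v00^2*vm0^2*v01^3*q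 + (-40)*a^5*v00^2*v10*vm0*v01^3*q + 20*a^5*v00^2*v10^2*v01^3*q + (-20)*a^5*v00^3*vm0^2*v01^2*q + 40*a^5*v00^3*v10*vm0*v01^2*q + (-20)*a^5*v00^3*v10^2*v01^2*q + 10*a^5*v00^4*vm0^2*v01*q + (-20)*a^5*v00^4*v10*vm0*v01*q + 10*a^5*v00^4*v10^2*v01*q + (-2)*a^5*v00^5*vm0^2*q + 4*a^5*v00^5*v10*vm0*q + (-2)*a^5*v00^5*v10^2*q)) * hP
  have key2 : L * ((a - b) * (v00 - v10) * (v00 - v01))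
      = 2 * (a * (v00 - v01) - b * (v00 - v10)) * P * q + (nn * q - mm * P) * ((v00 - v10) * (v00 - v01)) :=
    mul_left_cancel₀ (mul_ne_zero (pow_ne_zero 3 (mul_ne_zero ha h1m))
      (pow_ne_zero 2 (mul_ne_zero hab (pow_ne_zero 2 h01)))) key
  field_simp
  linear_combination key2

/-- Clearing denominators in a product of two fractions. -/
lemma clear2 {x A C B D : ℝ} (hC : C ≠ 0) (hD : D ≠ 0) (h : x = A / C * (B / D)) :
    x * (C * D) = A * B := by
  subst h
  field_simp

/-- Partial derivative with respect to the first variable. -/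
noncomputable def pda (f : ℝ × ℝ → ℝ) (p : ℝ × ℝ) : ℝ :=
  deriv (fun x => f (x, p.2)) p.1

/-- Partial derivative with respect to the second variable. -/
noncomputable def pdb (f : ℝ × ℝ → ℝ) (p : ℝ × ℝ) : ℝ :=
  deriv (fun y => f (p.1, y)) p.2

/-- The Q1 (δ=0) reduced system Σ_Q1(n,m). -/
def SigmaQ1 (n m : ℤ) (v v1 v2 : ℝ × ℝ → ℝ) (p : ℝ × ℝ) : Prop :=
  pdb v1 p = ((v1 p - v2 p) / (p.1 - p.2)) *
      (((m : ℝ) * (v p - v1 p) * (v p - v2 p) - p.2 * (v1 p - v2 p) * pdb v p)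
        / (v p - v2 p) ^ 2) ∧
  pda v2 p = ((v1 p - v2 p) / (p.1 - p.2)) *
      (((n : ℝ) * (v p - v1 p) * (v p - v2 p) + p.1 * (v1 p - v2 p) * pda v p)
        / (v p - v1 p) ^ 2) ∧
  pdb (pda v) p = (1 / (p.1 - p.2)) *
      (2 * (p.1 / (v p - v1 p) - p.2 / (v p - v2 p)) * pda v p * pdb v p
        + (n : ℝ) * pdb v p - (m : ℝ) * pda v p)

theorem continuously_invariant_Q1_satisfies_Sigma
    (v : ℤ → ℤ → ℝ × ℝ → ℝ) (D : Set (ℝ × ℝ)) (hD : IsOpen D)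
    (hαβ : ∀ p ∈ D, p.1 ≠ p.2) (hα0 : ∀ p ∈ D, p.1 ≠ 0) (hβ0 : ∀ p ∈ D, p.2 ≠ 0)
    (hsmooth : ∀ n m : ℤ, ContDiffOn ℝ (⊤ : ℕ∞) (v n m) D)
    (hQ1 : ∀ n m : ℤ, ∀ p ∈ D,
      p.1 * (v n m p - v n (m+1) p) * (v (n+1) m p - v (n+1) (m+1) p) =
        p.2 * (v n m p - v (n+1) m p) * (v n (m+1) p - v (n+1) (m+1) p))
    (hden1 : ∀ n m : ℤ, ∀ p ∈ D, v (n+1) m p - v (n-1) m p ≠ 0)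
    (hden2 : ∀ n m : ℤ, ∀ p ∈ D, v n (m+1) p - v n (m-1) p ≠ 0)
    (hne1 : ∀ n m : ℤ, ∀ p ∈ D, v n m p ≠ v (n+1) m p)
    (hne2 : ∀ n m : ℤ, ∀ p ∈ D, v n m p ≠ v n (m+1) p)
    (hisc1 : ∀ n m : ℤ, ∀ p ∈ D,
      p.1 * pda (v n m) p = (n : ℝ) * (v (n+1) m p - v n m p) * (v n m p - v (n-1) m p)
        / (v (n+1) m p - v (n-1) m p))
    (hisc2 : ∀ n m : ℤ, ∀ p ∈ D,
      p.2 * pdb (v n m) p = (m : ℝ) * (v n (m+1) p - v n m p) * (v n m p - v n (m-1) p)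
        / (v n (m+1) p - v n (m-1) p)) :
    ∀ n m : ℤ, ∀ p ∈ D, SigmaQ1 n m (v n m) (v (n+1) m) (v n (m+1)) p := by
  
  have hisc1' : ∀ n m : ℤ, ∀ p ∈ D,
      p.1 * pda (v n m) p * (v (n+1) m p - v (n-1) m p)
        = (n : ℝ) * (v (n+1) m p - v n m p) * (v n m p - v (n-1) m p) := by
    intro n m p hp
    have h := hisc1 n m p hp
    rw [eq_div_iff (hden1 n m p hp)] at h
    exact h
  have hisc2' : ∀ n m : ℤ, ∀ p ∈ D,
      p.2 * pdb (v n m) p * (v n (m+1) p - v n (m-1) p)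
        = (m : ℝ) * (v n (m+1) p - v n m p) * (v n m p - v n (m-1) p) := by
    intro n m p hp
    have h := hisc2 n m p hp
    rw [eq_div_iff (hden2 n m p hp)] at h
    exact h
  have keyF1 : ∀ n m : ℤ, ∀ p ∈ D,
      pdb (v (n+1) m) p = ((v (n+1) m p - v n (m+1) p) / (p.1 - p.2)) *
        (((m : ℝ) * (v n m p - v (n+1) m p) * (v n m p - v n (m+1) p)
            - p.2 * (v (n+1) m p - v n (m+1) p) * pdb (v n m) p) / (v n m p - v n (m+1) p) ^ 2) := by
    intro n m p hp
    have h2 := hQ1 n (m-1) p hp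
    simp only [Int.sub_add_cancel] at h2
    exact F1alg p.1 p.2 (m : ℝ) (v n m p) (v (n+1) m p) (v n (m+1) p) (v n (m-1) p)
      (v (n+1) (m+1) p) (v (n+1) (m-1) p) (pdb (v n m) p) (pdb (v (n+1) m) p)
      (sub_ne_zero.mpr (hαβ p hp)) (hα0 p hp) (hβ0 p hp)
      (sub_ne_zero.mpr (hne1 n m p hp)) (sub_ne_zero.mpr (hne2 n m p hp))
      (hden2 n m p hp) (hden2 (n+1) m p hp)
      (hQ1 n m p hp) h2 (hisc2' n m p hp) (hisc2' (n+1) m p hp)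
  have keyF1' : ∀ n m : ℤ, ∀ p ∈ D,
      pdb (v (n-1) m) p = ((v (n-1) m p - v n (m+1) p) / (p.1 - p.2)) *
        (((m : ℝ) * (v n m p - v (n-1) m p) * (v n m p - v n (m+1) p)
            - p.2 * (v (n-1) m p - v n (m+1) p) * pdb (v n m) p) / (v n m p - v n (m+1) p) ^ 2) := by
    intro n m p hp
    have hq1 := hQ1 (n-1) m p hp
    simp only [Int.sub_add_cancel] at hq1
    have hq2 := hQ1 (n-1) (m-1) p hp
    simp only [Int.sub_add_cancel] at hq2
    have e1 := hne1 (n-1) m p hp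
    simp only [Int.sub_add_cancel] at e1
    have h1 : p.1 * (v n m p - v n (m+1) p) * (v (n-1) m p - v (n-1) (m+1) p)
        = p.2 * (v n m p - v (n-1) m p) * (v n (m+1) p - v (n-1) (m+1) p) := by
      linear_combination hq1
    have h2 : p.1 * (v n (m-1) p - v n m p) * (v (n-1) (m-1) p - v (n-1) m p)
        = p.2 * (v n (m-1) p - v (n-1) (m-1) p) * (v n m p - v (n-1) m p) := by
      linear_combination hq2
    exact F1alg p.1 p.2 (m : ℝ) (v n m p) (v (n-1) m p) (v n (m+1) p) (v n (m-1) p)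
      (v (n-1) (m+1) p) (v (n-1) (m-1) p) (pdb (v n m) p) (pdb (v (n-1) m) p)
      (sub_ne_zero.mpr (hαβ p hp)) (hα0 p hp) (hβ0 p hp)
      (sub_ne_zero.mpr e1.symm) (sub_ne_zero.mpr (hne2 n m p hp))
      (hden2 n m p hp) (hden2 (n-1) m p hp)
      h1 h2 (hisc2' n m p hp) (hisc2' (n-1) m p hp)
  have keyF2 : ∀ n m : ℤ, ∀ p ∈ D,
      pda (v n (m+1)) p = ((v (n+1) m p - v n (m+1) p) / (p.1 - p.2)) *
        (((n : ℝ) * (v n m p - v (n+1) m p) * (v n m p - v n (m+1) p)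
            + p.1 * (v (n+1) m p - v n (m+1) p) * pda (v n m) p) / (v n m p - v (n+1) m p) ^ 2) := by
    intro n m p hp
    have hq1 := hQ1 (n-1) m p hp
    simp only [Int.sub_add_cancel] at hq1
    have step := F1alg p.2 p.1 (n : ℝ) (v n m p) (v n (m+1) p) (v (n+1) m p) (v (n-1) m p)
      (v (n+1) (m+1) p) (v (n-1) (m+1) p) (pda (v n m) p) (pda (v n (m+1)) p)
      (sub_ne_zero.mpr (Ne.symm (hαβ p hp))) (hβ0 p hp) (hα0 p hp)
      (sub_ne_zero.mpr (hne2 n m p hp)) (sub_ne_zero.mpr (hne1 n m p hp))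
      (hden1 n m p hp) (hden1 n (m+1) p hp)
      (hQ1 n m p hp).symm hq1.symm (hisc1' n m p hp) (hisc1' n (m+1) p hp)
    rw [step]
    have e1 : p.1 - p.2 ≠ 0 := sub_ne_zero.mpr (hαβ p hp)
    have e2 : p.2 - p.1 ≠ 0 := sub_ne_zero.mpr (Ne.symm (hαβ p hp))
    have e3 : v n m p - v (n+1) m p ≠ 0 := sub_ne_zero.mpr (hne1 n m p hp)
    field_simp
    ring
  intro n m p hp
  refine ⟨keyF1 n m p hp, keyF2 n m p hp, ?_⟩
  have ha : p.1 ≠ 0 := hα0 p hp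
  have hab : p.1 - p.2 ≠ 0 := sub_ne_zero.mpr (hαβ p hp)
  have h1m : v (n+1) m p - v (n-1) m p ≠ 0 := hden1 n m p hp
  have h01 : v n m p - v n (m+1) p ≠ 0 := sub_ne_zero.mpr (hne2 n m p hp)
  have h0010 : v n m p - v (n+1) m p ≠ 0 := sub_ne_zero.mpr (hne1 n m p hp)
  have hder : ∀ k l : ℤ, HasDerivAt (fun y => v k l (p.1, y)) (pdb (v k l) p) p.2 := by
    intro k l
    have hda : DifferentiableAt ℝ (v k l) p :=
      ((hsmooth k l).contDiffAt (hD.mem_nhds hp)).differentiableAt (by simp)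
    have hin : DifferentiableAt ℝ (fun y : ℝ => ((p.1, y) : ℝ × ℝ)) p.2 :=
      (differentiableAt_const _).prodMk differentiableAt_id
    have hcomp : DifferentiableAt ℝ (fun y => v k l (p.1, y)) p.2 := hda.comp p.2 hin
    exact hcomp.hasDerivAt
  have hmem : {y : ℝ | (p.1, y) ∈ D} ∈ nhds p.2 :=
    (hD.preimage (Continuous.prodMk_right p.1)).mem_nhds (by exact hp)
  have heq : (fun y => pda (v n m) (p.1, y)) =ᶠ[nhds p.2]
      (fun y => ((n : ℝ) * ((v (n+1) m (p.1, y) - v n m (p.1, y)) * (v n m (p.1, y) - v (n-1) m (p.1, y))))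
        / (p.1 * (v (n+1) m (p.1, y) - v (n-1) m (p.1, y)))) := by
    filter_upwards [hmem] with y hy
    have h := hisc1 n m (p.1, y) hy
    have hC : v (n+1) m (p.1, y) - v (n-1) m (p.1, y) ≠ 0 := hden1 n m (p.1, y) hy
    have ha' : p.1 ≠ 0 := hα0 (p.1, y) hy
    rw [eq_div_iff hC] at h
    rw [eq_div_iff (mul_ne_zero ha' hC)]
    linear_combination h
  have hGd : HasDerivAt
      (fun y => ((n : ℝ) * ((v (n+1) m (p.1, y) - v n m (p.1, y)) * (v n m (p.1, y) - v (n-1) m (p.1, y))))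
        / (p.1 * (v (n+1) m (p.1, y) - v (n-1) m (p.1, y))))
      (((n : ℝ) * ((pdb (v (n+1) m) p - pdb (v n m) p) * (v n m p - v (n-1) m p)
            + (v (n+1) m p - v n m p) * (pdb (v n m) p - pdb (v (n-1) m) p))
          * (p.1 * (v (n+1) m p - v (n-1) m p))
        - (n : ℝ) * ((v (n+1) m p - v n m p) * (v n m p - v (n-1) m p))
          * (p.1 * (pdb (v (n+1) m) p - pdb (v (n-1) m) p)))
        / (p.1 * (v (n+1) m p - v (n-1) m p)) ^ 2) p.2 :=
    HasDerivAt.div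
      ((((hder (n+1) m).sub (hder n m)).mul ((hder n m).sub (hder (n-1) m))).const_mul (n : ℝ))
      (((hder (n+1) m).sub (hder (n-1) m)).const_mul p.1)
      (mul_ne_zero ha h1m)
  have hpd : pdb (pda (v n m)) p
      = (((n : ℝ) * ((pdb (v (n+1) m) p - pdb (v n m) p) * (v n m p - v (n-1) m p)
            + (v (n+1) m p - v n m p) * (pdb (v n m) p - pdb (v (n-1) m) p))
          * (p.1 * (v (n+1) m p - v (n-1) m p))
        - (n : ℝ) * ((v (n+1) m p - v n m p) * (v n m p - v (n-1) m p))
          * (p.1 * (pdb (v (n+1) m) p - pdb (v (n-1) m) p)))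
        / (p.1 * (v (n+1) m p - v (n-1) m p)) ^ 2) := heq.deriv_eq.trans hGd.deriv
  have hLc : pdb (pda (v n m)) p * (p.1 * (v (n+1) m p - v (n-1) m p)) ^ 2
      = (n : ℝ) * ((pdb (v (n+1) m) p - pdb (v n m) p) * (v n m p - v (n-1) m p)
            + (v (n+1) m p - v n m p) * (pdb (v n m) p - pdb (v (n-1) m) p))
          * (p.1 * (v (n+1) m p - v (n-1) m p))
        - (n : ℝ) * ((v (n+1) m p - v n m p) * (v n m p - v (n-1) m p))
          * (p.1 * (pdb (v (n+1) m) p - pdb (v (n-1) m) p)) := by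
    rw [hpd]
    exact div_mul_cancel₀ _ (pow_ne_zero 2 (mul_ne_zero ha h1m))
  have hd1c := clear2 hab (pow_ne_zero 2 h01) (keyF1 n m p hp)
  have hd3c := clear2 hab (pow_ne_zero 2 h01) (keyF1' n m p hp)
  exact F3alg p.1 p.2 (n : ℝ) (m : ℝ) (v n m p) (v (n+1) m p) (v (n-1) m p) (v n (m+1) p)
    (pdb (v n m) p) (pdb (v (n+1) m) p) (pdb (v (n-1) m) p) (pda (v n m) p)
    (pdb (pda (v n m)) p) ha hab h1m h01 h0010 hd1c hd3c (hisc1' n m p hp) hLc
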